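/- If a finite-dimensional commutative Frobenius algebra (A, f) over a field of characteristic 0 decomposes as a direct product A = F × A' with F a field, then the Euler class e_{A,f} is not nilpotent. -/

import Mathlib

/-!
Expanding `a * e i` in the basis `e` and pairing with the dual basis `d` gives
`f (a * ε) = Tr (x ↦ a * x)` for the Euler class `ε = ∑ i, e i * d i`. Take for `a` the
idempotent `p` corresponding to `(1, 0) ∈ F × A'`: multiplication by `p` is the projection onto
`F`, so its trace is `dim_K F`, which is nonzero in characteristic `0`. If `ε` were nilpotent,
its component in the field `F` would vanish, so `p * ε = 0` and the trace would be `f 0 = 0`.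
-/

open Module

theorem Algebra.trace_eq_apply_mul_sum_mul_dual {K A ι : Type*} [CommRing K] [CommRing A]
    [Algebra K A] [Fintype ι] [DecidableEq ι] (f : A →ₗ[K] K) (e : Basis ι K A) (d : ι → A)
    (hd : ∀ i j, f (e i * d j) = if i = j then (1 : K) else 0) (a : A) :
    Algebra.trace K A a = f (a * ∑ i, e i * d i) := by
  have diag (i : ι) : f (a * e i * d i) = e.repr (a * e i) i := by
    conv_lhs => rw [← e.sum_repr (a * e i)]
    simp only [Finset.sum_mul, smul_mul_assoc, map_sum, map_smul, hd, smul_eq_mul, mul_ite,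
      mul_one, mul_zero, Finset.sum_ite_eq', Finset.mem_univ, if_true]
  simp only [Algebra.trace_eq_matrix_trace e, Matrix.trace, Matrix.diag, Finset.mul_sum, map_sum,
    ← mul_assoc, diag, Algebra.leftMulMatrix_eq_repr_mul]

theorem Algebra.trace_symm_one_zero {K A F A' : Type*} [CommRing K] [Nontrivial K] [CommRing A]
    [Algebra K A] [CommRing F] [Algebra K F] [Module.Free K F] [Module.Finite K F] [CommRing A']
    [Algebra K A'] [Module.Free K A'] [Module.Finite K A'] (φ : A ≃ₐ[K] F × A') :
    Algebra.trace K A (φ.symm (1, 0)) = finrank K F := by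
  rw [← Algebra.trace_eq_of_algEquiv φ, AlgEquiv.apply_symm_apply, Algebra.trace_prod_apply,
    ← map_one (algebraMap K F), Algebra.trace_algebraMap]
  simp

theorem euler_not_nilpotent_of_field_factor_general (K A F A' : Type) [Field K] [CharZero K]
    [CommRing A] [Algebra K A] [FiniteDimensional K A]
    [Field F] [Algebra K F] [CommRing A'] [Algebra K A']
    (φ : A ≃ₐ[K] F × A')
    (f : A →ₗ[K] K)
    (ι : Type) [Fintype ι] [DecidableEq ι] (e : Module.Basis ι K A) (d : ι → A)
    (hd : ∀ i j, f (e i * d j) = if i = j then (1 : K) else 0) :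
    ¬ IsNilpotent (∑ i, e i * d i) := by
  intro hnil
  have : Module.Finite K F := .of_surjective ((LinearMap.fst K F A').comp φ.toLinearMap)
    (Prod.fst_surjective.comp φ.surjective)
  have : Module.Finite K A' := .of_surjective ((LinearMap.snd K F A').comp φ.toLinearMap)
    (Prod.snd_surjective.comp φ.surjective)
  set ε := ∑ i, e i * d i
  have hε : (φ ε).1 = 0 := ((hnil.map φ).map (RingHom.fst F A')).eq_zero
  have hpε : φ.symm (1, 0) * ε = 0 := φ.injective (by ext <;> simp [hε])
  have htrace := Algebra.trace_eq_apply_mul_sum_mul_dual f e d hd (φ.symm (1, 0))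
  rw [Algebra.trace_symm_one_zero, hpε, map_zero, Nat.cast_eq_zero] at htrace
  exact Module.finrank_pos.ne' htrace

/-- If a finite-dimensional commutative Frobenius algebra over a field of
characteristic 0 decomposes as `A ≅ F × A'` with `F` a field, then its Euler class is
not nilpotent. -/
theorem euler_not_nilpotent_of_field_factor (K A F A' : Type) [Field K] [CharZero K]
    [CommRing A] [Algebra K A] [FiniteDimensional K A]
    [Field F] [Algebra K F] [CommRing A'] [Algebra K A']
    (φ : A ≃ₐ[K] F × A')
    (f : A →ₗ[K] K)
    (hf : ∀ a : A, (∀ b : A, f (a * b) = 0) → a = 0)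
    (ι : Type) [Fintype ι] [DecidableEq ι] (e : Module.Basis ι K A) (d : ι → A)
    (hd : ∀ i j, f (e i * d j) = if i = j then (1 : K) else 0) :
    ¬ IsNilpotent (∑ i, e i * d i) :=
  euler_not_nilpotent_of_field_factor_general K A F A' φ f ι e d hd
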